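/- arXiv:2503.21042 — 2 statements merged into one kernel-verified Lean document; each statement's English description precedes it below -/
import Mathlib

section
/- Let g(v) = (P_L/C)·(1/V_r − 1/(v + V_r)) where P_L, C, V_r > 0. Then for all v in [V_min − V_r, V_max − V_r] \ {0}, with 0 < V_min ≤ V_r ≤ V_max, the ratio g(v)/v satisfies P_L/(C·V_max²) ≤ g(v)/v ≤ P_L/(C·V_min²). -/
theorem stmt_3 (P_L C V_r V_min V_max : ℝ) (hP : 0 < P_L) (hC : 0 < C)
    (hmin : 0 < V_min) (h1 : V_min ≤ V_r) (h2 : V_r ≤ V_max)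
    (g : ℝ → ℝ) (hg : ∀ v, g v = (P_L / C) * (1 / V_r - 1 / (v + V_r))) :
    ∀ v ∈ Set.Icc (V_min - V_r) (V_max - V_r), v ≠ 0 →
      P_L / (C * V_max ^ 2) ≤ g v / v ∧ g v / v ≤ P_L / (C * V_min ^ 2) := by
  intro v hv hne
  obtain ⟨hlo, hhi⟩ := hv
  have hwlo : V_min ≤ v + V_r := by linarith
  have hwhi : v + V_r ≤ V_max := by linarith
  have hw : 0 < v + V_r := lt_of_lt_of_le hmin hwlo
  have hVr : 0 < V_r := lt_of_lt_of_le hmin h1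
  have hmax : 0 < V_max := lt_of_lt_of_le hmin (h1.trans h2)
  have key : g v / v = P_L / (C * (V_r * (v + V_r))) := by
    rw [hg]
    field_simp
    ring
  rw [key]
  constructor
  · apply div_le_div_of_nonneg_left hP.le (by positivity)
    have : V_r * (v + V_r) ≤ V_max * V_max := by nlinarith
    nlinarith
  · apply div_le_div_of_nonneg_left hP.le (by positivity)
    have : V_min * V_min ≤ V_r * (v + V_r) := by nlinarith
    nlinarith
end

section
/- For a quadratic storage function V(x) = x^T P x with P > 0 and dynamics ẋ = Âx + g(x) + u, if 2x^T P g(x) ≤ x^T R x for all x, and the matrix [[−(Â^T P + P Â) − R − ρI, ½I − P],[½I − P, −νI]] is positive semidefinite, then V̇(x) ≤ [u; x]^T [[−νI, ½I],[½I, −ρI]] [u; x] for all x, u, i.e., the system is IF-OFP(ν, ρ) from u to x. -/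
/-!
Evaluating the quadratic form of the LMI at `[x; u]` gives, for symmetric `P`, exactly the supply
rate `-ν|u|² + uᵀx - ρ|x|²` minus `2xᵀP(Âx + u) + xᵀRx`. Positive semidefiniteness makes this
difference nonnegative, and the sector bound `2xᵀPg(x) ≤ xᵀRx` then absorbs the nonlinearity.
-/

open Matrix

namespace Matrix

variable {m o α : Type*} [Fintype m] [Fintype o]

theorem sumElim_dotProduct_fromBlocks_mulVec_sumElim [NonUnitalNonAssocSemiring α]
    (A : Matrix m m α) (B : Matrix m o α) (C : Matrix o m α) (D : Matrix o o α)
    (x : m → α) (u : o → α) :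
    Sum.elim x u ⬝ᵥ fromBlocks A B C D *ᵥ Sum.elim x u =
      x ⬝ᵥ A *ᵥ x + x ⬝ᵥ B *ᵥ u + (u ⬝ᵥ C *ᵥ x + u ⬝ᵥ D *ᵥ u) := by
  simp only [fromBlocks_mulVec, Sum.elim_comp_inl, Sum.elim_comp_inr,
    sumElim_dotProduct_sumElim, dotProduct_add]

theorem IsSymm.dotProduct_mulVec_comm [CommSemiring α] {P : Matrix m m α} (hP : P.IsSymm)
    (x y : m → α) : x ⬝ᵥ P *ᵥ y = y ⬝ᵥ P *ᵥ x := by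
  rw [dotProduct_mulVec, ← mulVec_transpose, hP.eq, dotProduct_comm]

theorem IsSymm.dotProduct_transpose_mul_add_mul_mulVec_self [CommSemiring α]
    {P : Matrix m m α} (hP : P.IsSymm) (A : Matrix m m α) (x : m → α) :
    x ⬝ᵥ (Aᵀ * P + P * A) *ᵥ x = 2 * (x ⬝ᵥ P *ᵥ A *ᵥ x) := by
  rw [add_mulVec, dotProduct_add, ← mulVec_mulVec, ← mulVec_mulVec, dotProduct_mulVec x Aᵀ,
    vecMul_transpose, hP.dotProduct_mulVec_comm, two_mul]

end Matrix

section IFOFP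

variable {m α : Type*} [Fintype m] [DecidableEq m]

def ifofpLMI [Field α] (P A R : Matrix m m α) (ν ρ : α) : Matrix (m ⊕ m) (m ⊕ m) α :=
  fromBlocks (-(Aᵀ * P + P * A) - R - ρ • 1) ((1 / 2 : α) • 1 - P) ((1 / 2 : α) • 1 - P)
    (-ν • 1)

theorem Matrix.IsSymm.sumElim_dotProduct_ifofpLMI_mulVec_sumElim [Field α] [NeZero (2 : α)]
    {P : Matrix m m α} (hP : P.IsSymm) (A R : Matrix m m α) (ν ρ : α) (x u : m → α) :
    Sum.elim x u ⬝ᵥ ifofpLMI P A R ν ρ *ᵥ Sum.elim x u =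
      (-ν * (u ⬝ᵥ u) + u ⬝ᵥ x - ρ * (x ⬝ᵥ x)) -
        (2 * (x ⬝ᵥ P *ᵥ (A *ᵥ x + u)) + x ⬝ᵥ R *ᵥ x) := by
  rw [ifofpLMI, sumElim_dotProduct_fromBlocks_mulVec_sumElim]
  simp only [sub_mulVec, neg_mulVec, smul_mulVec, one_mulVec, dotProduct_sub, dotProduct_neg,
    dotProduct_smul, smul_eq_mul, hP.dotProduct_transpose_mul_add_mul_mulVec_self, mulVec_add,
    dotProduct_add, hP.dotProduct_mulVec_comm u x, dotProduct_comm x u]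
  linear_combination (u ⬝ᵥ x) * add_halves (1 : α)

theorem Matrix.IsSymm.dissipation_le_supplyRate_of_posSemidef_ifofpLMI {P : Matrix m m ℝ}
    (hP : P.IsSymm) {A R : Matrix m m ℝ} {ν ρ : ℝ} (hLMI : (ifofpLMI P A R ν ρ).PosSemidef)
    (x u : m → ℝ) :
    2 * (x ⬝ᵥ P *ᵥ (A *ᵥ x + u)) + x ⬝ᵥ R *ᵥ x ≤ -ν * (u ⬝ᵥ u) + u ⬝ᵥ x - ρ * (x ⬝ᵥ x) := by
  have hquad := hLMI.dotProduct_mulVec_nonneg (Sum.elim x u)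
  rw [star_trivial, hP.sumElim_dotProduct_ifofpLMI_mulVec_sumElim] at hquad
  linarith

end IFOFP

theorem stmt_10_general (n : ℕ) (P R Ahat : Matrix (Fin n) (Fin n) ℝ) (hP : P.PosDef)
    (ν ρ : ℝ) (g : (Fin n → ℝ) → (Fin n → ℝ))
    (hg : ∀ x : Fin n → ℝ, 2 * (x ⬝ᵥ P.mulVec (g x)) ≤ x ⬝ᵥ R.mulVec x)
    (hLMI : (Matrix.fromBlocks
        (-(Ahatᵀ * P + P * Ahat) - R - ρ • (1 : Matrix (Fin n) (Fin n) ℝ))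
        ((1 / 2 : ℝ) • (1 : Matrix (Fin n) (Fin n) ℝ) - P)
        ((1 / 2 : ℝ) • (1 : Matrix (Fin n) (Fin n) ℝ) - P)
        (-ν • (1 : Matrix (Fin n) (Fin n) ℝ))).PosSemidef) :
    ∀ x u : Fin n → ℝ,
      2 * (x ⬝ᵥ P.mulVec (Ahat.mulVec x + g x + u)) ≤
        -ν * (u ⬝ᵥ u) + u ⬝ᵥ x - ρ * (x ⬝ᵥ x) := by
  intro x u
  have hPsymm : P.IsSymm := isHermitian_iff_isSymm.mp hP.isHermitian
  have hlinear := hPsymm.dissipation_le_supplyRate_of_posSemidef_ifofpLMI (A := Ahat) hLMI x u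
  have hsplit : x ⬝ᵥ P *ᵥ (Ahat *ᵥ x + g x + u) =
      x ⬝ᵥ P *ᵥ (Ahat *ᵥ x + u) + x ⬝ᵥ P *ᵥ g x := by
    simp only [mulVec_add, dotProduct_add]
    ring
  linarith [hg x]

theorem stmt_10 (n : ℕ) (P R Ahat : Matrix (Fin n) (Fin n) ℝ) (hP : P.PosDef)
    (hR : R.IsSymm) (ν ρ : ℝ) (g : (Fin n → ℝ) → (Fin n → ℝ))
    (hg : ∀ x : Fin n → ℝ, 2 * (x ⬝ᵥ P.mulVec (g x)) ≤ x ⬝ᵥ R.mulVec x)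
    (hLMI : (Matrix.fromBlocks
        (-(Ahatᵀ * P + P * Ahat) - R - ρ • (1 : Matrix (Fin n) (Fin n) ℝ))
        ((1 / 2 : ℝ) • (1 : Matrix (Fin n) (Fin n) ℝ) - P)
        ((1 / 2 : ℝ) • (1 : Matrix (Fin n) (Fin n) ℝ) - P)
        (-ν • (1 : Matrix (Fin n) (Fin n) ℝ))).PosSemidef) :
    ∀ x u : Fin n → ℝ,
      2 * (x ⬝ᵥ P.mulVec (Ahat.mulVec x + g x + u)) ≤
        -ν * (u ⬝ᵥ u) + u ⬝ᵥ x - ρ * (x ⬝ᵥ x) :=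
  stmt_10_general n P R Ahat hP ν ρ g hg hLMI
end
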